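/- Let p be a prime, let M, M̃ ∈ M_n(ℤ) be expanding matrices and D, D̃ ⊂ ℤ^n finite digit sets, and let A, B ∈ M_n(ℤ) have determinants not divisible by p with AB ≡ I (mod p), M̃ = AMB and D = B D̃. If Z_{D̃}^n ⊆ E̊_p^n, then M^t Z(m_D) ⊆ (1/det(AB)) (B^t)^{−1} M̃^t Z(m_{D̃}) and M̃^t Z(m_{D̃}) ⊆ B^t M^t Z(m_D). -/

import Mathlib

open MeasureTheory Matrix Set Complex
open scoped Real Pointwise ENNReal

noncomputable section

namespace SA

variable {n : ℕ}

/-- Cast an integer matrix to a real matrix. -/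
def toR (M : Matrix (Fin n) (Fin n) ℤ) : Matrix (Fin n) (Fin n) ℝ :=
  M.map (Int.cast : ℤ → ℝ)

/-- Cast an integer vector to a real vector. -/
def vecR (d : Fin n → ℤ) : Fin n → ℝ := fun i => (d i : ℝ)

/-- A real matrix is expanding if all of its complex eigenvalues have modulus > 1. -/
def IsExpandingR (M : Matrix (Fin n) (Fin n) ℝ) : Prop :=
  ∀ z : ℂ, (M.map (Complex.ofReal)).charpoly.IsRoot z → 1 < ‖z‖

/-- An integer matrix is expanding if all of its complex eigenvalues have modulus > 1. -/
def IsExpanding (M : Matrix (Fin n) (Fin n) ℤ) : Prop :=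
  IsExpandingR (toR M)

/-- Standard inner product on `ℝ^n`. -/
def dotR (x y : Fin n → ℝ) : ℝ := ∑ i, x i * y i

/-- The exponential function `e_λ(x) = e^{2πi⟨λ,x⟩}`. -/
def expFun (lam : Fin n → ℝ) : (Fin n → ℝ) → ℂ :=
  fun x => Complex.exp (2 * Real.pi * Complex.I * (dotR lam x))

/-- Mask polynomial of a finite real digit set. -/
def maskR (D : Finset (Fin n → ℝ)) (x : Fin n → ℝ) : ℂ :=
  (D.card : ℂ)⁻¹ * ∑ d ∈ D, Complex.exp (2 * Real.pi * Complex.I * (dotR d x))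

/-- Zero set of the mask polynomial of a real digit set. -/
def maskZR (D : Finset (Fin n → ℝ)) : Set (Fin n → ℝ) := {x | maskR D x = 0}

/-- Mask polynomial of a finite integer digit set. -/
def mask (D : Finset (Fin n → ℤ)) (x : Fin n → ℝ) : ℂ :=
  (D.card : ℂ)⁻¹ * ∑ d ∈ D, Complex.exp (2 * Real.pi * Complex.I * (dotR (vecR d) x))

/-- Zero set `Z(m_D)` of the mask polynomial of an integer digit set. -/
def maskZ (D : Finset (Fin n → ℤ)) : Set (Fin n → ℝ) := {x | mask D x = 0}

/-- `Z_D^n := Z(m_D) ∩ [0,1)^n`. -/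
def ZDn (D : Finset (Fin n → ℤ)) : Set (Fin n → ℝ) :=
  maskZ D ∩ {x | ∀ i, 0 ≤ x i ∧ x i < 1}

/-- `E̊_p^n := (1/p){(l₁,…,l_n) : 0 ≤ lᵢ ≤ p-1} \ {0}`. -/
def Ering (p n : ℕ) : Set (Fin n → ℝ) :=
  {x | (∃ l : Fin n → ℕ, (∀ i, l i ≤ p - 1) ∧ ∀ i, x i = (l i : ℝ) / p) ∧ x ≠ 0}

/-- The integer lattice `ℤ^n` inside `ℝ^n`. -/
def latticeZ (n : ℕ) : Set (Fin n → ℝ) := {x | ∀ i, ∃ k : ℤ, x i = (k : ℝ)}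

/-- `μ` is the self-affine measure generated by the real expanding matrix `M`
and the real digit set `D`: it is a Borel probability measure satisfying
`μ = (1/|D|) ∑_{d∈D} μ ∘ φ_d⁻¹` with `φ_d(x) = M⁻¹(x+d)`. -/
def IsSelfAffineR (M : Matrix (Fin n) (Fin n) ℝ) (D : Finset (Fin n → ℝ))
    (μ : Measure (Fin n → ℝ)) : Prop :=
  IsProbabilityMeasure μ ∧
    μ = (D.card : ℝ≥0∞)⁻¹ • ∑ d ∈ D, μ.map (fun x => M⁻¹.mulVec (x + d))

/-- `μ` is the self-affine measure generated by the integer expanding matrix `M`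
and the integer digit set `D`. -/
def IsSelfAffine (M : Matrix (Fin n) (Fin n) ℤ) (D : Finset (Fin n → ℤ))
    (μ : Measure (Fin n → ℝ)) : Prop :=
  IsProbabilityMeasure μ ∧
    μ = (D.card : ℝ≥0∞)⁻¹ • ∑ d ∈ D, μ.map (fun x => (toR M)⁻¹.mulVec (x + vecR d))

/-- Fourier transform `μ̂(ξ) = ∫ e^{2πi⟨x,ξ⟩} dμ(x)`. -/
def FT (μ : Measure (Fin n → ℝ)) (ξ : Fin n → ℝ) : ℂ :=
  ∫ x, Complex.exp (2 * Real.pi * Complex.I * (dotR x ξ)) ∂μ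

/-- The family of exponentials `E(Λ)` is mutually orthogonal in `L²(μ)`:
`μ̂(λ - λ') = 0` for all distinct `λ, λ' ∈ Λ`. -/
def OrthExp (μ : Measure (Fin n → ℝ)) (Λ : Set (Fin n → ℝ)) : Prop :=
  ∀ a ∈ Λ, ∀ b ∈ Λ, a ≠ b → FT μ (a - b) = 0

/-- `Λ` is a spectrum of `μ`: the exponentials `{e^{2πi⟨λ,x⟩} : λ ∈ Λ}` form an
orthonormal (Hilbert) basis of `L²(μ)`. -/
def IsSpectrum (μ : Measure (Fin n → ℝ)) (Λ : Set (Fin n → ℝ)) : Prop :=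
  ∃ b : HilbertBasis Λ ℂ (Lp ℂ 2 μ), ∀ l : Λ, (b l : Lp ℂ 2 μ) =ᵐ[μ] expFun (l : Fin n → ℝ)

/-- `μ` is a spectral measure. -/
def IsSpectralMeasure (μ : Measure (Fin n → ℝ)) : Prop :=
  ∃ Λ : Set (Fin n → ℝ), Λ.Countable ∧ IsSpectrum μ Λ

/-- `(M, D)` is admissible: there is `S ⊂ ℤ^n` with `|S| = |D|` such that
`H = (1/√|S|)[e^{2πi⟨M⁻¹d,s⟩}]_{d∈D,s∈S}` satisfies `H^*H = I`. -/
def Admissible (M : Matrix (Fin n) (Fin n) ℤ) (D : Finset (Fin n → ℤ)) : Prop :=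
  ∃ S : Finset (Fin n → ℤ), S.card = D.card ∧
    letI H : Matrix {d // d ∈ D} {s // s ∈ S} ℂ := fun d s =>
      ((1 : ℂ) / (Real.sqrt S.card : ℂ)) *
        Complex.exp (2 * Real.pi * Complex.I *
          (dotR ((toR M)⁻¹.mulVec (vecR (d : Fin n → ℤ))) (vecR (s : Fin n → ℤ))))
    Hᴴ * H = 1

/-- Two matrices are congruent entrywise modulo `p`. -/
def ModEq (p : ℕ) (A B : Matrix (Fin n) (Fin n) ℤ) : Prop :=
  ∀ i j, (p : ℤ) ∣ (A i j - B i j)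

/-- `(M, D)` and `(M̃, D̃)` are conjugate in `GL_n(p)`: there are integer matrices
`A, B` with determinants prime to `p`, `AB ≡ I (mod p)`, `M̃ = AMB`, and either
`D = B D̃` or `D̃ = A D`. -/
def ConjugateGL (p : ℕ) (M Mt : Matrix (Fin n) (Fin n) ℤ)
    (D Dt : Finset (Fin n → ℤ)) : Prop :=
  ∃ A B : Matrix (Fin n) (Fin n) ℤ,
    ¬ (p : ℤ) ∣ A.det ∧ ¬ (p : ℤ) ∣ B.det ∧ ModEq p (A * B) 1 ∧ Mt = A * M * B ∧
      ((∀ d, d ∈ D ↔ ∃ dt ∈ Dt, d = B.mulVec dt) ∨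
       (∀ dt, dt ∈ Dt ↔ ∃ d ∈ D, dt = A.mulVec d))

/-!
Substituting `d = B d̃` turns `m_D(x)` into `m_{D̃}(Bᵀ x)`. Every zero `y` of `m_{D̃}` satisfies
`p y ∈ ℤⁿ`, because its fractional part is again a zero and hence lies in `E̊_pⁿ`. So an integer
matrix `E ≡ I (mod p)` moves `y` by a vector of `ℤⁿ`, and since `m_{D̃}` is `ℤⁿ`-periodic, `E y`
is again a zero. For the second inclusion take `E = (AB)ᵀ`; for the first take
`E = adj((AB)ᵀ)`, which satisfies `Aᵀ E Bᵀ = det(AB) I`.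
-/

lemma toR_mul (X Y : Matrix (Fin n) (Fin n) ℤ) : toR (X * Y) = toR X * toR Y :=
  Matrix.map_mul (f := Int.castRingHom ℝ)

lemma toR_transpose (X : Matrix (Fin n) (Fin n) ℤ) : toR Xᵀ = (toR X)ᵀ := rfl

lemma det_toR (X : Matrix (Fin n) (Fin n) ℤ) : (toR X).det = X.det :=
  ((Int.castRingHom ℝ).map_det X).symm

lemma vecR_mulVec (X : Matrix (Fin n) (Fin n) ℤ) (d : Fin n → ℤ) :
    vecR (X *ᵥ d) = toR X *ᵥ vecR d :=
  funext ((Int.castRingHom ℝ).map_mulVec X d)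

lemma dotR_mulVec (X : Matrix (Fin n) (Fin n) ℝ) (v x : Fin n → ℝ) :
    dotR (X *ᵥ v) x = dotR v (Xᵀ *ᵥ x) := by
  change (X *ᵥ v) ⬝ᵥ x = v ⬝ᵥ (Xᵀ *ᵥ x)
  rw [mulVec_transpose, dotProduct_comm, dotProduct_mulVec, dotProduct_comm]

lemma mul_adjugate_mul_mul {ι R : Type*} [Fintype ι] [DecidableEq ι] [CommRing R]
    (X Y : Matrix ι ι R) :
    Y * (X * Y).adjugate * X = (X * Y).det • 1 := by
  rw [adjugate_mul_distrib, ← Matrix.mul_assoc, mul_adjugate, Matrix.smul_mul, Matrix.one_mul,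
    Matrix.smul_mul, adjugate_mul, smul_smul, det_mul, mul_comm]

lemma toR_transpose_eq_of_eq_mul_mul {M Mt A B : Matrix (Fin n) (Fin n) ℤ}
    (hMt : Mt = A * M * B) : (toR Mt)ᵀ = (toR B)ᵀ * (toR M)ᵀ * (toR A)ᵀ := by
  rw [hMt, toR_mul, toR_mul, transpose_mul, transpose_mul, Matrix.mul_assoc]

lemma toR_transpose_mul_adjugate_mul_transpose (A B : Matrix (Fin n) (Fin n) ℤ) :
    (toR A)ᵀ * toR (A * B)ᵀ.adjugate * (toR B)ᵀ = ((A * B).det : ℝ) • 1 := by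
  rw [← toR_transpose, ← toR_transpose, ← toR_mul, ← toR_mul, transpose_mul,
    mul_adjugate_mul_mul, ← transpose_mul, det_transpose]
  ext i j
  simp only [toR, map_apply, Matrix.smul_apply, one_apply, smul_eq_mul]
  split_ifs <;> simp

lemma sub_mem_latticeZ {x y : Fin n → ℝ} (hx : x ∈ latticeZ n) (hy : y ∈ latticeZ n) :
    x - y ∈ latticeZ n := fun i => by
  obtain ⟨a, ha⟩ := hx i
  obtain ⟨b, hb⟩ := hy i
  exact ⟨a - b, by simp [ha, hb]⟩

lemma natCast_smul_mem_latticeZ (p : ℕ) {x : Fin n → ℝ} (hx : x ∈ latticeZ n) :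
    (p : ℝ) • x ∈ latticeZ n := fun i => by
  obtain ⟨a, ha⟩ := hx i
  exact ⟨p * a, by simp [ha]⟩

lemma toR_mulVec_mem_latticeZ (X : Matrix (Fin n) (Fin n) ℤ) {x : Fin n → ℝ}
    (hx : x ∈ latticeZ n) : toR X *ᵥ x ∈ latticeZ n := by
  choose k hk using hx
  intro i
  exact ⟨(X *ᵥ k) i, by simp [← vecR_mulVec, vecR, show x = vecR k from funext hk]⟩

lemma fract_sub_mem_latticeZ (y : Fin n → ℝ) : (fun i => Int.fract (y i)) - y ∈ latticeZ n :=
  fun i => ⟨-⌊y i⌋, by simp only [Pi.sub_apply, Int.fract, Int.cast_neg]; ring⟩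

lemma natCast_smul_mem_latticeZ_of_mem_Ering {p : ℕ} {x : Fin n → ℝ} (hx : x ∈ Ering p n) :
    (p : ℝ) • x ∈ latticeZ n := by
  obtain ⟨⟨l, -, hl⟩, hx0⟩ := hx
  have hp : (p : ℝ) ≠ 0 := fun hp => hx0 (funext fun i => by simp [hl, hp])
  exact fun i => ⟨l i, by simp [hl, mul_div_cancel₀ _ hp]⟩

lemma mask_add_of_mem_latticeZ (D : Finset (Fin n → ℤ)) (y : Fin n → ℝ) {z : Fin n → ℝ}
    (hz : z ∈ latticeZ n) : mask D (y + z) = mask D y := by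
  choose k hk using hz
  unfold mask
  congr 1
  refine Finset.sum_congr rfl fun d _ => ?_
  have hdot : dotR (vecR d) (y + z) = dotR (vecR d) y + ((∑ i, d i * k i : ℤ) : ℝ) := by
    simp only [dotR, vecR, Pi.add_apply, hk, mul_add, Finset.sum_add_distrib]
    push_cast
    rfl
  rw [hdot, Complex.ofReal_add, mul_add, Complex.exp_add, Complex.ofReal_intCast,
    mul_comm _ ((_ : ℤ) : ℂ), Complex.exp_int_mul_two_pi_mul_I, mul_one]

lemma mem_maskZ_of_sub_mem_latticeZ {D : Finset (Fin n → ℤ)} {y y' : Fin n → ℝ}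
    (hy : y ∈ maskZ D) (h : y' - y ∈ latticeZ n) : y' ∈ maskZ D := by
  change mask D y' = 0
  rw [← add_sub_cancel y y', mask_add_of_mem_latticeZ D y h]
  exact hy

lemma mask_eq_mask_transpose_mulVec {D Dt : Finset (Fin n → ℤ)} {B : Matrix (Fin n) (Fin n) ℤ}
    (hB : B.det ≠ 0) (hD : ∀ d, d ∈ D ↔ ∃ dt ∈ Dt, d = B *ᵥ dt) (x : Fin n → ℝ) :
    mask D x = mask Dt ((toR B)ᵀ *ᵥ x) := by
  have hinj := mulVec_injective_of_det_ne_zero hB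
  obtain rfl : D = Dt.image (B *ᵥ ·) := by ext d; simp [hD d, eq_comm]
  unfold mask
  rw [Finset.card_image_of_injective _ hinj, Finset.sum_image fun a _ b _ h => hinj h]
  simp only [vecR_mulVec, dotR_mulVec]

lemma natCast_smul_mem_latticeZ_of_mem_maskZ {p : ℕ} {D : Finset (Fin n → ℤ)}
    (hZ : ZDn D ⊆ Ering p n) {y : Fin n → ℝ} (hy : y ∈ maskZ D) : (p : ℝ) • y ∈ latticeZ n := by
  set y₀ : Fin n → ℝ := fun i => Int.fract (y i)
  have hy₀ : y₀ ∈ ZDn D := ⟨mem_maskZ_of_sub_mem_latticeZ hy (fract_sub_mem_latticeZ y),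
    fun i => ⟨Int.fract_nonneg _, Int.fract_lt_one _⟩⟩
  rw [← sub_sub_cancel y₀ y, smul_sub]
  exact sub_mem_latticeZ (natCast_smul_mem_latticeZ_of_mem_Ering (hZ hy₀))
    (natCast_smul_mem_latticeZ p (fract_sub_mem_latticeZ y))

lemma modEq_iff_map_eq {p : ℕ} {X Y : Matrix (Fin n) (Fin n) ℤ} :
    ModEq p X Y ↔ X.map (Int.cast : ℤ → ZMod p) = Y.map Int.cast := by
  simp only [ModEq, ← Matrix.ext_iff, map_apply, ZMod.intCast_eq_intCast_iff_dvd_sub,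
    dvd_sub_comm]

lemma ModEq.transpose {p : ℕ} {X Y : Matrix (Fin n) (Fin n) ℤ} (h : ModEq p X Y) :
    ModEq p Xᵀ Yᵀ :=
  fun i j => h j i

lemma ModEq.adjugate {p : ℕ} {X Y : Matrix (Fin n) (Fin n) ℤ} (h : ModEq p X Y) :
    ModEq p X.adjugate Y.adjugate := by
  rw [modEq_iff_map_eq] at h ⊢
  have hmap (Z : Matrix (Fin n) (Fin n) ℤ) : Z.adjugate.map (Int.cast : ℤ → ZMod p) =
      (Z.map Int.cast).adjugate :=
    (Int.castRingHom (ZMod p)).map_adjugate Z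
  rw [hmap, hmap, h]

lemma ModEq.toR_mulVec_sub_mem_latticeZ {p : ℕ} {E : Matrix (Fin n) (Fin n) ℤ}
    (hE : ModEq p E 1) {y : Fin n → ℝ} (hy : (p : ℝ) • y ∈ latticeZ n) :
    toR E *ᵥ y - y ∈ latticeZ n := by
  choose C hC using hE
  have hEC : toR E = 1 + (p : ℝ) • toR (Matrix.of C) := by
    ext i j
    simp only [toR, map_apply, Matrix.add_apply, Matrix.smul_apply, of_apply, smul_eq_mul]
    rw [show E i j = (1 : Matrix (Fin n) (Fin n) ℤ) i j + p * C i j by linarith [hC i j]]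
    simp [one_apply]
  rw [hEC, add_mulVec, one_mulVec, add_sub_cancel_left, smul_mulVec, ← mulVec_smul]
  exact toR_mulVec_mem_latticeZ _ hy

lemma toR_mulVec_mem_maskZ {p : ℕ} {D : Finset (Fin n → ℤ)} (hZ : ZDn D ⊆ Ering p n)
    {E : Matrix (Fin n) (Fin n) ℤ} (hE : ModEq p E 1) {y : Fin n → ℝ} (hy : y ∈ maskZ D) :
    toR E *ᵥ y ∈ maskZ D :=
  mem_maskZ_of_sub_mem_latticeZ hy
    (hE.toR_mulVec_sub_mem_latticeZ (natCast_smul_mem_latticeZ_of_mem_maskZ hZ hy))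

theorem maskZ_one_subset_general {n : ℕ} {p : ℕ}
    (M Mt : Matrix (Fin n) (Fin n) ℤ)
    (D Dt : Finset (Fin n → ℤ)) (A B : Matrix (Fin n) (Fin n) ℤ)
    (hA : ¬ (p : ℤ) ∣ A.det) (hB : ¬ (p : ℤ) ∣ B.det)
    (hAB : ModEq p (A * B) 1) (hMteq : Mt = A * M * B)
    (hDeq : ∀ d, d ∈ D ↔ ∃ dt ∈ Dt, d = B.mulVec dt)
    (hZ : ZDn Dt ⊆ Ering p n) :
    (∀ x ∈ maskZ D, ∃ y ∈ maskZ Dt,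
        (toR M)ᵀ.mulVec x =
          (((A * B).det : ℤ) : ℝ)⁻¹ • ((toR B)ᵀ)⁻¹.mulVec ((toR Mt)ᵀ.mulVec y)) ∧
      (∀ y ∈ maskZ Dt, ∃ x ∈ maskZ D,
        (toR Mt)ᵀ.mulVec y = (toR B)ᵀ.mulVec ((toR M)ᵀ.mulVec x)) := by
  have hB₀ : B.det ≠ 0 := fun h => hB (h ▸ dvd_zero _)
  have hmask := mask_eq_mask_transpose_mulVec hB₀ hDeq
  have hABt : ModEq p (A * B)ᵀ 1 := by simpa only [transpose_one] using hAB.transpose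
  have hMt := toR_transpose_eq_of_eq_mul_mul hMteq
  constructor
  · intro x hx
    have hz : (toR B)ᵀ *ᵥ x ∈ maskZ Dt := (hmask x).symm.trans hx
    refine ⟨_, toR_mulVec_mem_maskZ hZ (by simpa only [adjugate_one] using hABt.adjugate) hz, ?_⟩
    have hdet : ((A * B).det : ℝ) ≠ 0 := by
      have hA₀ : A.det ≠ 0 := fun h => hA (h ▸ dvd_zero _)
      exact_mod_cast det_mul A B ▸ mul_ne_zero hA₀ hB₀
    have hBu : IsUnit ((toR B)ᵀ).det := by
      rw [det_transpose, det_toR]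
      exact isUnit_iff_ne_zero.2 (by exact_mod_cast hB₀)
    calc (toR M)ᵀ *ᵥ x
        = ((A * B).det : ℝ)⁻¹ •
            (((toR B)ᵀ)⁻¹ * ((toR B)ᵀ * ((toR M)ᵀ * (((A * B).det : ℝ) • 1)))) *ᵥ x := by
          rw [nonsing_inv_mul_cancel_left _ _ hBu, Matrix.mul_smul, Matrix.mul_one, smul_mulVec,
            inv_smul_smul₀ hdet]
      _ = _ := by
          rw [← toR_transpose_mul_adjugate_mul_transpose, hMt]
          simp only [mulVec_mulVec, Matrix.mul_assoc]
  · intro y hy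
    refine ⟨(toR A)ᵀ *ᵥ y, ?_, by rw [hMt, mulVec_mulVec, mulVec_mulVec]⟩
    change mask D _ = 0
    rw [hmask, mulVec_mulVec, ← toR_transpose, ← toR_transpose, ← toR_mul, ← transpose_mul]
    exact toR_mulVec_mem_maskZ hZ hABt hy

/-- `M^t Z(m_D) ⊆ (1/det(AB)) (B^t)⁻¹ M̃^t Z(m_{D̃})` and
`M̃^t Z(m_{D̃}) ⊆ B^t M^t Z(m_D)`. -/
theorem maskZ_one_subset {n : ℕ} {p : ℕ} (hp : p.Prime)
    (M Mt : Matrix (Fin n) (Fin n) ℤ) (hM : IsExpanding M) (hMt : IsExpanding Mt)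
    (D Dt : Finset (Fin n → ℤ)) (A B : Matrix (Fin n) (Fin n) ℤ)
    (hA : ¬ (p : ℤ) ∣ A.det) (hB : ¬ (p : ℤ) ∣ B.det)
    (hAB : ModEq p (A * B) 1) (hMteq : Mt = A * M * B)
    (hDeq : ∀ d, d ∈ D ↔ ∃ dt ∈ Dt, d = B.mulVec dt)
    (hZ : ZDn Dt ⊆ Ering p n) :
    (∀ x ∈ maskZ D, ∃ y ∈ maskZ Dt,
        (toR M)ᵀ.mulVec x =
          (((A * B).det : ℤ) : ℝ)⁻¹ • ((toR B)ᵀ)⁻¹.mulVec ((toR Mt)ᵀ.mulVec y)) ∧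
      (∀ y ∈ maskZ Dt, ∃ x ∈ maskZ D,
        (toR Mt)ᵀ.mulVec y = (toR B)ᵀ.mulVec ((toR M)ᵀ.mulVec x)) :=
  maskZ_one_subset_general M Mt D Dt A B hA hB hAB hMteq hDeq hZ

end SA
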